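/- arXiv:1205.5991 — 2 statements merged into one kernel-verified Lean document; each statement's English description precedes it below -/
import Mathlib

section
/- The generating function identity Σ_{n≥0} p(n) x^n = ( Σ_{k∈ℤ} (-1)^k x^{k(3k−1)/2} )^{-1} holds as formal power series, i.e. ( Σ_{n≥0} p(n) x^n ) · ( Σ_{k∈ℤ} (-1)^k x^{k(3k−1)/2} ) = 1. -/
open PowerSeries

/-- Generating function of the partition numbers. -/
noncomputable def partitionSeries : PowerSeries ℤ :=
  PowerSeries.mk fun n => (Fintype.card (Nat.Partition n) : ℤ)

/-- Euler's pentagonal number series `∑_{k ∈ ℤ} (-1)^k x^{k(3k-1)/2}`: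
the coefficient of `x^n` is the sum of `(-1)^k` over all integers `k`
with `k(3k-1)/2 = n` (all such `k` satisfy `|k| ≤ n`). -/
noncomputable def pentagonalSeries : PowerSeries ℤ :=
  PowerSeries.mk fun n =>
    ∑ k ∈ Finset.Icc (-(n : ℤ)) (n : ℤ),
      if k * (3 * k - 1) / 2 = (n : ℤ) then (-1 : ℤ) ^ k.natAbs else 0

/-! By Euler, `∑ p(n) xⁿ = ∏ᵢ (1 - x^(i+1))⁻¹`, and by the pentagonal number theorem
`∏ᵢ (1 - x^(i+1)) = ∑ₖ (-1)^k x^(k(3k-1)/2)`; both hold as infinite products in the coefficientwise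
topology, so the product of the two series is `∏ᵢ 1 = 1`. Matching the coefficients of the series above
with `PowerSeries.pentagonalSeries` uses that `k ↦ k(3k-1)/2` is injective with `|k| ≤ k(3k-1)/2`. -/

open PowerSeries.WithPiTopology

theorem natAbs_le_pentagonal (k : ℤ) : k.natAbs ≤ pentagonal k := by
  have h := two_mul_natCast_pentagonal k
  zify
  rcases abs_cases k with ⟨hk, _⟩ | ⟨hk, _⟩ <;> rw [hk] <;> nlinarith

theorem pentagonalSeries_eq_powerSeries_pentagonalSeries :
    _root_.pentagonalSeries = PowerSeries.pentagonalSeries ℤ := by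
  ext n
  have hcond (k : ℤ) : k * (3 * k - 1) / 2 = (n : ℤ) ↔ pentagonal k = n := by
    rw [← natCast_pentagonal, Nat.cast_inj]
  simp only [_root_.pentagonalSeries, coeff_mk, hcond]
  by_cases hn : n ∈ Set.range pentagonal
  · obtain ⟨k, rfl⟩ := hn
    have hk : k ∈ Finset.Icc (-(pentagonal k : ℤ)) (pentagonal k) := by
      have := natAbs_le_pentagonal k
      rw [Finset.mem_Icc]
      omega
    simp only [pentagonal_inj, coeff_pentagonalSeries_pentagonal, Int.coe_negOnePow]
    rw [Finset.sum_ite_eq_of_mem' _ _ _ hk]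
  · rw [coeff_pentagonalSeries_eq_zero ℤ hn]
    exact Finset.sum_eq_zero fun k _ => if_neg fun h => hn ⟨k, h⟩

theorem hasProd_partitionSeries :
    HasProd (fun i => ∑' j : ℕ, (X : ℤ⟦X⟧) ^ ((i + 1) * j)) partitionSeries := by
  simpa [partitionSeries, Nat.Partition.restricted] using
    Nat.Partition.hasProd_powerSeriesMk_card_restricted ℤ fun _ => True

theorem partition_generating_function : partitionSeries * _root_.pentagonalSeries = 1 := by
  rw [pentagonalSeries_eq_powerSeries_pentagonalSeries]
  have geometric (i : ℕ) : (∑' j : ℕ, (X : ℤ⟦X⟧) ^ ((i + 1) * j)) * (1 - X ^ (i + 1)) = 1 := by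
    simp_rw [pow_mul]
    exact tsum_pow_mul_one_sub_of_constantCoeff_eq_zero (by simp)
  have h := hasProd_partitionSeries.mul (hasProd_one_sub_X_pow ℤ)
  simp only [geometric] at h
  exact h.unique hasProd_one
end

section
/- Let x > 0, let δ be a real number with x|δ| < log 2, and let x̂ = x(1+δ). Then for U(x) = cosh(x) − sinh(x)/x with x ≥ 3, we have |U(x̂) − U(x)| / U(x) ≤ 3 x |δ|. -/
/-! By the mean value theorem `|U(x̂) - U(x)| ≤ x|δ| · sup U'` over the segment between `x` and
`x̂`, which lies in `[x - x|δ|, x + x|δ|] ⊆ [2, ∞)`. There `0 ≤ U'(t) ≤ sinh t ≤ eᵗ/2`, so the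
supremum is at most `e^{x + x|δ|}/2 ≤ eˣ`, using `x|δ| < log 2`; finally `eˣ ≤ 3 U(x)` for `x ≥ 3`. -/

open Real

/-- `U(x) = cosh x - sinh x / x`. -/
noncomputable def radeU (x : ℝ) : ℝ := Real.cosh x - Real.sinh x / x

namespace Real

lemma sinh_le_exp_div_two (t : ℝ) : sinh t ≤ exp t / 2 := by
  rw [sinh_eq]
  linarith [exp_pos (-t)]

lemma cosh_le_two_mul_sinh {t : ℝ} (ht : 1 ≤ t) : cosh t ≤ 2 * sinh t := by
  have h_exp : 2 ≤ exp t := by linarith [add_one_le_exp t]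
  have h_inv : exp t * exp (-t) = 1 := by rw [← exp_add, add_neg_cancel, exp_zero]
  rw [cosh_eq, sinh_eq]
  nlinarith [exp_pos (-t)]

end Real

lemma hasDerivAt_radeU {t : ℝ} (ht : t ≠ 0) :
    HasDerivAt radeU (sinh t - cosh t / t + sinh t / t ^ 2) t := by
  have h := (hasDerivAt_cosh t).sub ((hasDerivAt_sinh t).div (hasDerivAt_id' t) ht)
  exact h.congr_deriv (by field_simp; ring)

lemma norm_deriv_radeU_le {t : ℝ} (ht : 2 ≤ t) : ‖deriv radeU t‖ ≤ exp t / 2 := by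
  have ht0 : 0 < t := by linarith
  have h_sinh : 0 < sinh t := sinh_pos_iff.2 ht0
  have h_cosh : cosh t ≤ 2 * sinh t := cosh_le_two_mul_sinh (by linarith)
  -- `cosh t / t ≤ cosh t / 2 ≤ sinh t` gives `U' ≥ 0`; `sinh t ≤ t cosh t` gives `U' ≤ sinh t`.
  have h_lower : cosh t / t ≤ sinh t := by
    rw [div_le_iff₀ ht0]
    nlinarith [cosh_pos t]
  have h_upper : sinh t / t ^ 2 ≤ cosh t / t := by
    rw [div_le_div_iff₀ (by positivity) ht0]
    nlinarith [mul_le_mul_of_nonneg_right (sinh_lt_cosh t).le ht0.le,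
      mul_nonneg (mul_nonneg (cosh_pos t).le ht0.le) (by linarith : (0:ℝ) ≤ t - 1)]
  rw [(hasDerivAt_radeU ht0.ne').deriv, norm_eq_abs, abs_of_nonneg (by positivity)]
  linarith [sinh_le_exp_div_two t]

lemma abs_radeU_sub_le {x y r : ℝ} (hxr : 2 + r ≤ x) (hy : |y - x| ≤ r) :
    |radeU y - radeU x| ≤ exp (x + r) / 2 * r := by
  have h_ball : ∀ t ∈ Metric.closedBall x r, 2 ≤ t ∧ t ≤ x + r := by
    intro t ht
    rw [Real.closedBall_eq_Icc] at ht
    exact ⟨by linarith [ht.1], ht.2⟩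
  have hr : 0 ≤ r := (abs_nonneg _).trans hy
  have h_mvt := (convex_closedBall x r).norm_image_sub_le_of_norm_deriv_le
    (C := exp (x + r) / 2)
    (fun t ht => (hasDerivAt_radeU (by linarith [(h_ball t ht).1])).differentiableAt)
    (fun t ht => (norm_deriv_radeU_le (h_ball t ht).1).trans
      (by gcongr; exact (h_ball t ht).2))
    (Metric.mem_closedBall_self hr) (by rwa [Metric.mem_closedBall, dist_eq])
  rw [norm_eq_abs, norm_eq_abs] at h_mvt
  exact h_mvt.trans (by gcongr)

lemma exp_le_three_mul_radeU {x : ℝ} (hx : 3 ≤ x) : exp x ≤ 3 * radeU x := by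
  have h_sinh : 0 < sinh x := sinh_pos_iff.2 (by linarith)
  have h_div : sinh x / x ≤ sinh x / 3 := div_le_div_of_nonneg_left h_sinh.le (by norm_num) hx
  rw [radeU, cosh_eq]
  rw [sinh_eq] at h_div ⊢
  linarith [exp_pos (-x)]

theorem radeU_relative_error (x δ : ℝ) (hx : 3 ≤ x) (hδ : x * |δ| < Real.log 2) :
    |radeU (x * (1 + δ)) - radeU x| / radeU x ≤ 3 * x * |δ| := by
  have hx0 : 0 < x := by linarith
  have h_exp : exp (x + x * |δ|) ≤ 2 * exp x := by
    rw [exp_add, mul_comm 2]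
    gcongr
    exact (exp_lt_exp.2 hδ).le.trans (exp_log two_pos).le
  have h_diff : |radeU (x * (1 + δ)) - radeU x| ≤ exp (x + x * |δ|) / 2 * (x * |δ|) := by
    refine abs_radeU_sub_le (by linarith [log_two_lt_d9]) (le_of_eq ?_)
    rw [show x * (1 + δ) - x = x * δ by ring, abs_mul, abs_of_pos hx0]
  have hU : exp x ≤ 3 * radeU x := exp_le_three_mul_radeU hx
  rw [div_le_iff₀ (by linarith [exp_pos x])]
  calc |radeU (x * (1 + δ)) - radeU x| ≤ exp x * (x * |δ|) := by
        refine h_diff.trans ?_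
        gcongr
        linarith
    _ ≤ 3 * radeU x * (x * |δ|) := by gcongr
    _ = 3 * x * |δ| * radeU x := by ring
end
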